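/- arXiv:2207.05607 — 2 statements merged into one kernel-verified Lean document; each statement's English description precedes it below -/
import Mathlib

section
/- There exist constants τ_Y > 0 and C > 0, depending only on n and the constants c_Y, C_Y, C_R, c_ρ, A_0, A_1, such that for every 0 < τ ≤ τ_Y, every 0 < ε ≤ τ_Y/10, every smooth ρ : ℝ^{n−1} → (−∞, 0] with |∂_{y'}ρ| ≤ c_ρ and |∂²_{y'}ρ| ≤ c_ρ, and every (y, ξ) ∈ ℝⁿ × ℝⁿ with y ∈ W(τ, ε) and p_ψ(y, ξ) = 0, one has |ξ_n| ≤ C τ_Y and |a(y', ξ') − 2| ≤ C τ_Y; i.e., the characteristic set of the conjugated symbol is contained in {a(y', ξ') = 2 + O(τ_Y), ξ_n = O(τ_Y)}. -/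
open scoped BigOperators

noncomputable section

/-- `ℝ^m` with its Euclidean norm. -/
abbrev Esp (m : ℕ) := EuclideanSpace ℝ (Fin m)

/-- The quadratic form with (real) coefficient matrix `M`, evaluated at `v`. -/
noncomputable def quadForm {m : ℕ} (M : Matrix (Fin m) (Fin m) ℝ) (v : Esp m) : ℝ :=
  ∑ i, ∑ j, M i j * v i * v j

/-- The quadratic form with real coefficient matrix `M`, evaluated at a complex
covector `v`. -/
noncomputable def quadFormC {m : ℕ} (M : Matrix (Fin m) (Fin m) ℝ) (v : Fin m → ℂ) : ℂ :=
  ∑ i, ∑ j, (M i j : ℂ) * v i * v j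

/-- The complex tangential covector `ξ' + i ∂_{y'}ψ(y)` where `ψ(y) = (⋯)yₙ + 2τρ(y')`,
so that `∂_{y'_i}ψ = 2τ ∂_{y'_i}ρ(y')`. -/
noncomputable def zetaPrime {m : ℕ} (τ : ℝ) (ρ : Esp m → ℝ) (y' ξ' : Esp m) :
    Fin m → ℂ :=
  fun i => (ξ' i : ℂ) + Complex.I * (2 * τ * fderiv ℝ ρ y' (EuclideanSpace.single i 1))

/-- The Poisson bracket `{f, g} = Σⱼ (∂_{ξⱼ}f ∂_{yⱼ}g − ∂_{yⱼ}f ∂_{ξⱼ}g)` of two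
functions on phase space `ℝⁿ_y × ℝⁿ_ξ`, where `y = (y', yₙ)` and `ξ = (ξ', ξₙ)`. -/
noncomputable def poissonBracket {m : ℕ}
    (f g : (Esp m × ℝ) × (Esp m × ℝ) → ℝ) (z : (Esp m × ℝ) × (Esp m × ℝ)) : ℝ :=
  (∑ j : Fin m,
      (fderiv ℝ f z ((0 : Esp m × ℝ), (EuclideanSpace.single j (1 : ℝ), (0 : ℝ)))
          * fderiv ℝ g z ((EuclideanSpace.single j (1 : ℝ), (0 : ℝ)), (0 : Esp m × ℝ))
        - fderiv ℝ f z ((EuclideanSpace.single j (1 : ℝ), (0 : ℝ)), (0 : Esp m × ℝ))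
          * fderiv ℝ g z ((0 : Esp m × ℝ), (EuclideanSpace.single j (1 : ℝ), (0 : ℝ)))))
    + (fderiv ℝ f z ((0 : Esp m × ℝ), ((0 : Esp m), (1 : ℝ)))
          * fderiv ℝ g z (((0 : Esp m), (1 : ℝ)), (0 : Esp m × ℝ))
        - fderiv ℝ f z (((0 : Esp m), (1 : ℝ)), (0 : Esp m × ℝ))
          * fderiv ℝ g z ((0 : Esp m × ℝ), ((0 : Esp m), (1 : ℝ))))

/-- The conjugated symbol `p_ψ(y, ξ) = p(y, ξ + i ∂_yψ(y))` for
`p(y,ξ) = ξₙ² + a(y',ξ') − 2yₙ b(y',ξ') + R(y,ξ') − 1` and `ψ(y) = yₙ + 2τρ(y')`,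
where `a`, `b`, `R` are the quadratic forms with coefficient matrices `A`, `B`, `R`. -/
noncomputable def pPsi {m : ℕ} (A B : Esp m → Matrix (Fin m) (Fin m) ℝ)
    (R : Esp m × ℝ → Matrix (Fin m) (Fin m) ℝ) (τ : ℝ) (ρ : Esp m → ℝ)
    (z : (Esp m × ℝ) × (Esp m × ℝ)) : ℂ :=
  ((z.2.2 : ℂ) + Complex.I) ^ 2
    + quadFormC (A z.1.1) (zetaPrime τ ρ z.1.1 z.2.1)
    - 2 * (z.1.2 : ℂ) * quadFormC (B z.1.1) (zetaPrime τ ρ z.1.1 z.2.1)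
    + quadFormC (R z.1) (zetaPrime τ ρ z.1.1 z.2.1)
    - 1

/-! The imaginary part of the tangential covector is `η = 2τ∇ρ(y') = O(τ)`, and on `W(τ, ε)` we
have `|yₙ| = O(τ_Y)`, so `b` and `R` only contribute `O(τ_Y)`-perturbations. With `s` and `t` the
`ℓ¹`-sizes `∑ |vᵢ|` of `ξ'` and `η`, the real and imaginary parts of `p_ψ = 0` give
`ξₙ² + a(ξ') − 2 = O(t² + |yₙ|(s² + t²))` and `ξₙ = O(st + |yₙ|(s² + t²))`. As `ξₙ² ≥ 0`,
ellipticity of `a` turns the first relation into a bound on `s` once `τ_Y` is small; feeding it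
back gives `ξₙ = O(τ_Y)`, and then `a(ξ') − 2 = O(τ_Y)`. -/

section QuadraticForms

variable {m : ℕ}

def bilinForm (M : Matrix (Fin m) (Fin m) ℝ) (x y : Esp m) : ℝ :=
  ∑ i, ∑ j, M i j * x i * y j

lemma sq_norm_le_sq_sum_abs (v : Esp m) : ‖v‖ ^ 2 ≤ (∑ i, |v i|) ^ 2 := by
  rw [EuclideanSpace.norm_sq_eq]
  simpa only [Real.norm_eq_abs, sq_abs] using
    Finset.sum_sq_le_sq_sum_of_nonneg (s := Finset.univ) (fun i _ => abs_nonneg (v i))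

lemma sq_sum_abs_le_mul_sq_norm (v : Esp m) : (∑ i, |v i|) ^ 2 ≤ m * ‖v‖ ^ 2 := by
  rw [EuclideanSpace.norm_sq_eq]
  simpa only [Real.norm_eq_abs, Finset.card_univ, Fintype.card_fin] using
    sq_sum_le_card_mul_sum_sq (s := Finset.univ) (f := fun i => |v i|)

lemma abs_bilinForm_le {M : Matrix (Fin m) (Fin m) ℝ} {K : ℝ} (hM : ∀ i j, |M i j| ≤ K)
    (x y : Esp m) : |bilinForm M x y| ≤ K * (∑ i, |x i|) * ∑ j, |y j| := by
  calc |bilinForm M x y| ≤ ∑ i, ∑ j, |M i j * x i * y j| :=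
        (Finset.abs_sum_le_sum_abs _ _).trans
          (Finset.sum_le_sum fun i _ => Finset.abs_sum_le_sum_abs _ _)
    _ ≤ ∑ i, ∑ j, K * |x i| * |y j| := by
        gcongr with i _ j _
        rw [abs_mul, abs_mul]
        gcongr
        exact hM i j
    _ = K * (∑ i, |x i|) * ∑ j, |y j| := by
        rw [mul_assoc, Finset.sum_mul_sum, Finset.mul_sum]
        simp only [Finset.mul_sum, mul_assoc]

lemma abs_quadForm_le {M : Matrix (Fin m) (Fin m) ℝ} {K : ℝ} (hM : ∀ i j, |M i j| ≤ K)
    (v : Esp m) : |quadForm M v| ≤ K * (∑ i, |v i|) ^ 2 :=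
  calc |quadForm M v| = |bilinForm M v v| := rfl
    _ ≤ K * (∑ i, |v i|) * ∑ i, |v i| := abs_bilinForm_le hM v v
    _ = K * (∑ i, |v i|) ^ 2 := by ring

lemma bilinForm_add_bilinForm_swap (M : Matrix (Fin m) (Fin m) ℝ) (x y : Esp m) :
    bilinForm M x y + bilinForm M y x
      = quadForm M (x + y) - quadForm M x - quadForm M y := by
  simp only [bilinForm, quadForm, PiLp.add_apply, ← Finset.sum_add_distrib,
    ← Finset.sum_sub_distrib]
  exact Finset.sum_congr rfl fun i _ => Finset.sum_congr rfl fun j _ => by ring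

lemma abs_quadForm_le_of_norm {M : Matrix (Fin m) (Fin m) ℝ} {c : ℝ} (hc : 0 ≤ c)
    (hM : ∀ v : Esp m, |quadForm M v| ≤ c * ‖v‖ ^ 2) (v : Esp m) :
    |quadForm M v| ≤ c * (∑ i, |v i|) ^ 2 :=
  (hM v).trans (mul_le_mul_of_nonneg_left (sq_norm_le_sq_sum_abs v) hc)

lemma abs_bilinForm_add_bilinForm_swap_le_of_norm {M : Matrix (Fin m) (Fin m) ℝ} {c : ℝ}
    (hc : 0 ≤ c) (hM : ∀ v : Esp m, |quadForm M v| ≤ c * ‖v‖ ^ 2) (x y : Esp m) :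
    |bilinForm M x y + bilinForm M y x| ≤ 3 * c * ((∑ i, |x i|) ^ 2 + (∑ i, |y i|) ^ 2) := by
  have hxy := abs_quadForm_le_of_norm hc hM (x + y)
  have hx := abs_quadForm_le_of_norm hc hM x
  have hy := abs_quadForm_le_of_norm hc hM y
  set s := ∑ i, |x i|
  set t := ∑ i, |y i|
  have hsum : (∑ i, |(x + y) i|) ^ 2 ≤ (s + t) ^ 2 := by
    refine pow_le_pow_left₀ (Finset.sum_nonneg fun i _ => abs_nonneg _) ?_ 2
    rw [← Finset.sum_add_distrib]
    exact Finset.sum_le_sum fun i _ => abs_add_le _ _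
  have hst : c * (s + t) ^ 2 ≤ 2 * c * (s ^ 2 + t ^ 2) := by
    nlinarith [mul_nonneg hc (sq_nonneg (s - t))]
  have hxy' := hxy.trans (mul_le_mul_of_nonneg_left hsum hc)
  rw [bilinForm_add_bilinForm_swap, abs_le]
  constructor <;> linarith [abs_le.1 hxy', abs_le.1 hx, abs_le.1 hy]

lemma quadFormC_ofReal_add_I_mul (M : Matrix (Fin m) (Fin m) ℝ) (x y : Esp m) :
    quadFormC M (fun i => (x i : ℂ) + Complex.I * y i)
      = ((quadForm M x - quadForm M y : ℝ) : ℂ)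
        + Complex.I * ((bilinForm M x y + bilinForm M y x : ℝ) : ℂ) := by
  simp only [quadFormC, quadForm, bilinForm, Complex.ofReal_sub, Complex.ofReal_add,
    Complex.ofReal_sum, Complex.ofReal_mul, Finset.mul_sum, ← Finset.sum_sub_distrib,
    ← Finset.sum_add_distrib]
  refine Finset.sum_congr rfl fun i _ => Finset.sum_congr rfl fun j _ => ?_
  linear_combination ((M i j : ℂ) * y i * y j) * Complex.I_sq

lemma sum_abs_mul_apply_single_le (r : ℝ) (L : Esp m →L[ℝ] ℝ) :
    ∑ i, |r * L (EuclideanSpace.single i 1)| ≤ m * |r| * ‖L‖ :=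
  calc ∑ i, |r * L (EuclideanSpace.single i 1)| ≤ ∑ _i : Fin m, |r| * ‖L‖ := by
        gcongr with i
        rw [abs_mul]
        gcongr
        simpa using L.le_opNorm (EuclideanSpace.single i 1)
    _ = m * |r| * ‖L‖ := by simp [mul_assoc]

lemma mul_sq_sum_abs_le {M : Matrix (Fin m) (Fin m) ℝ} {A1 : ℝ} (hA1 : 0 ≤ A1) {v : Esp m}
    (hv : A1 * ‖v‖ ^ 2 ≤ quadForm M v) : A1 * (∑ i, |v i|) ^ 2 ≤ m * quadForm M v :=
  calc A1 * (∑ i, |v i|) ^ 2 ≤ A1 * (m * ‖v‖ ^ 2) :=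
        mul_le_mul_of_nonneg_left (sq_sum_abs_le_mul_sq_norm v) hA1
    _ = m * (A1 * ‖v‖ ^ 2) := by ring
    _ ≤ m * quadForm M v := mul_le_mul_of_nonneg_left hv m.cast_nonneg

end QuadraticForms

section ConjugatedSymbol

variable {m : ℕ}

open Complex

def conjSymbol (A B R : Matrix (Fin m) (Fin m) ℝ) (yn ξn : ℝ) (ζ : Fin m → ℂ) : ℂ :=
  ((ξn : ℂ) + I) ^ 2 + quadFormC A ζ - 2 * (yn : ℂ) * quadFormC B ζ + quadFormC R ζ - 1

lemma pPsi_eq_conjSymbol (A B : Esp m → Matrix (Fin m) (Fin m) ℝ)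
    (R : Esp m × ℝ → Matrix (Fin m) (Fin m) ℝ) (τ : ℝ) (ρ : Esp m → ℝ) (y' ξ' : Esp m)
    (yn ξn : ℝ) :
    pPsi A B R τ ρ ((y', yn), ξ', ξn) = conjSymbol (A y') (B y') (R (y', yn)) yn ξn
      (fun i => (ξ' i : ℂ) + I * (WithLp.toLp 2
        (fun j => 2 * τ * fderiv ℝ ρ y' (EuclideanSpace.single j 1)) : Esp m) i) := by
  unfold pPsi conjSymbol zetaPrime
  push_cast
  rfl

lemma conjSymbol_eq_zero_iff {A B R : Matrix (Fin m) (Fin m) ℝ} {yn ξn : ℝ} {x η : Esp m} :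
    conjSymbol A B R yn ξn (fun i => (x i : ℂ) + I * η i) = 0 ↔
      ξn ^ 2 - 2 + quadForm A x
          = quadForm A η + 2 * yn * (quadForm B x - quadForm B η)
            - (quadForm R x - quadForm R η) ∧
        2 * ξn = -(bilinForm A x η + bilinForm A η x)
            + 2 * yn * (bilinForm B x η + bilinForm B η x)
            - (bilinForm R x η + bilinForm R η x) := by
  have hsplit : conjSymbol A B R yn ξn (fun i => (x i : ℂ) + I * η i)
      = ((ξn ^ 2 - 2 + (quadForm A x - quadForm A η)
            - 2 * yn * (quadForm B x - quadForm B η) + (quadForm R x - quadForm R η) : ℝ) : ℂ)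
        + I * ((2 * ξn + (bilinForm A x η + bilinForm A η x)
            - 2 * yn * (bilinForm B x η + bilinForm B η x)
            + (bilinForm R x η + bilinForm R η x) : ℝ) : ℂ) := by
    simp only [conjSymbol, quadFormC_ofReal_add_I_mul]
    push_cast
    linear_combination I_sq
  rw [hsplit, Complex.ext_iff]
  simp only [add_re, ofReal_re, mul_re, I_re, ofReal_im, I_im, zero_re, add_im, mul_im,
    zero_im]
  constructor <;> rintro ⟨hre, him⟩ <;> constructor <;> linarith

lemma bounds_of_conjSymbol_eq_zero {A B R : Matrix (Fin m) (Fin m) ℝ} {A0 CR yn ξn : ℝ}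
    {x η : Esp m} (hA0 : 0 ≤ A0) (hCR : 0 ≤ CR)
    (hA : ∀ i j, |A i j| ≤ A0) (hB : ∀ i j, |B i j| ≤ A0)
    (hR : ∀ v, |quadForm R v| ≤ CR * yn ^ 2 * ‖v‖ ^ 2) (hyn : |yn| ≤ 1)
    (h : conjSymbol A B R yn ξn (fun i => (x i : ℂ) + I * η i) = 0) :
    |ξn ^ 2 - 2 + quadForm A x|
        ≤ 2 * (A0 + CR) * ((∑ i, |η i|) ^ 2
          + |yn| * ((∑ i, |x i|) ^ 2 + (∑ i, |η i|) ^ 2)) ∧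
      |ξn| ≤ 2 * (A0 + CR) * ((∑ i, |x i|) * (∑ i, |η i|)
          + |yn| * ((∑ i, |x i|) ^ 2 + (∑ i, |η i|) ^ 2)) := by
  obtain ⟨hre, him⟩ := conjSymbol_eq_zero_iff.1 h
  have hc : 0 ≤ CR * |yn| := by positivity
  have hR' : ∀ v, |quadForm R v| ≤ CR * |yn| * ‖v‖ ^ 2 := by
    have hyn2 : yn ^ 2 ≤ |yn| := by
      rw [← sq_abs]; nlinarith [abs_nonneg yn]
    exact fun v => (hR v).trans <|
      mul_le_mul_of_nonneg_right (mul_le_mul_of_nonneg_left hyn2 hCR) (sq_nonneg _)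
  have hAη := abs_quadForm_le hA η
  have hBx := abs_quadForm_le hB x
  have hBη := abs_quadForm_le hB η
  have hRx := abs_quadForm_le_of_norm hc hR' x
  have hRη := abs_quadForm_le_of_norm hc hR' η
  have hAxη := abs_bilinForm_le hA x η
  have hAηx := abs_bilinForm_le hA η x
  have hBxη := abs_bilinForm_le hB x η
  have hBηx := abs_bilinForm_le hB η x
  have hcR := abs_bilinForm_add_bilinForm_swap_le_of_norm hc hR' x η
  set s := ∑ i, |x i|
  set t := ∑ i, |η i|
  have hst : 2 * s * t ≤ s ^ 2 + t ^ 2 := by nlinarith [sq_nonneg (s - t)]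
  have hyB : |yn * (quadForm B x - quadForm B η)| ≤ |yn| * (A0 * (s ^ 2 + t ^ 2)) := by
    rw [abs_mul]
    refine mul_le_mul_of_nonneg_left ?_ (abs_nonneg _)
    linarith [abs_sub (quadForm B x) (quadForm B η)]
  have hycB : |yn * (bilinForm B x η + bilinForm B η x)| ≤ |yn| * (A0 * (s ^ 2 + t ^ 2)) := by
    rw [abs_mul]
    refine mul_le_mul_of_nonneg_left ?_ (abs_nonneg _)
    nlinarith [abs_add_le (bilinForm B x η) (bilinForm B η x)]
  have hCRt : 0 ≤ CR * t ^ 2 := by positivity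
  have hCRst : 0 ≤ CR * s * t := by positivity
  constructor
  · rw [hre, abs_le]
    constructor <;> linarith [abs_le.1 hAη, abs_le.1 hyB, abs_le.1 hRx, abs_le.1 hRη]
  · rw [abs_le]
    constructor <;> linarith [abs_le.1 hAxη, abs_le.1 hAηx, abs_le.1 hycB, abs_le.1 hcR]

end ConjugatedSymbol

section Scalar

variable {K δ c S s t yn ξn a : ℝ}

lemma sq_le_of_near_char {M A1 : ℝ} (hM : 0 ≤ M) (hK : 0 ≤ K) (hA1 : 0 < A1)
    (hδ : 2 * δ ≤ 1) (hKδ : 4 * M * K * δ ≤ A1) (ht : 0 ≤ t) (ht1 : t ≤ 1)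
    (hyn : |yn| ≤ 2 * δ) (hlow : A1 * s ^ 2 ≤ M * a)
    (hD : |ξn ^ 2 - 2 + a| ≤ K * (t ^ 2 + |yn| * (s ^ 2 + t ^ 2))) :
    s ^ 2 ≤ 4 * M * (1 + K) / A1 := by
  have ht2 : t ^ 2 ≤ 1 := pow_le_one₀ ht ht1
  have hyn' : |yn| * (s ^ 2 + t ^ 2) ≤ 2 * δ * s ^ 2 + 1 := by
    nlinarith [abs_nonneg yn, sq_nonneg s, sq_nonneg t]
  have ha : a ≤ 2 + 2 * K + 2 * K * δ * s ^ 2 := by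
    nlinarith [(abs_le.1 hD).2, sq_nonneg ξn]
  have hMa : M * a ≤ 2 * M * (1 + K) + A1 / 2 * s ^ 2 := by
    nlinarith [mul_le_mul_of_nonneg_left ha hM, sq_nonneg s]
  rw [le_div_iff₀ hA1]
  linarith

lemma abs_le_of_near_char (hK : 0 ≤ K) (hs : 0 ≤ s) (hS : s ^ 2 ≤ S)
    (ht : 0 ≤ t) (htδ : t ≤ c * δ) (ht1 : t ≤ 1) (hyn : |yn| ≤ 2 * δ)
    (him : |ξn| ≤ K * (s * t + |yn| * (s ^ 2 + t ^ 2))) :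
    |ξn| ≤ K * (S + 1) * (c + 2) * δ := by
  have hs1 : s ≤ S + 1 := by nlinarith [sq_nonneg (s - 1)]
  have hst : s * t ≤ (S + 1) * (c * δ) := mul_le_mul hs1 htδ ht (by linarith)
  have hyn' : |yn| * (s ^ 2 + t ^ 2) ≤ 2 * δ * (S + 1) :=
    mul_le_mul hyn (by nlinarith) (by positivity) (by linarith [abs_nonneg yn])
  calc |ξn| ≤ K * (s * t + |yn| * (s ^ 2 + t ^ 2)) := him
    _ ≤ K * ((S + 1) * (c * δ) + 2 * δ * (S + 1)) := by gcongr
    _ = K * (S + 1) * (c + 2) * δ := by ring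

lemma abs_sub_two_le_of_near_char {C₁ : ℝ} (hK : 0 ≤ K) (hS : s ^ 2 ≤ S)
    (ht : 0 ≤ t) (htδ : t ≤ c * δ) (ht1 : t ≤ 1) (hδ1 : δ ≤ 1) (hyn : |yn| ≤ 2 * δ)
    (hD : |ξn ^ 2 - 2 + a| ≤ K * (t ^ 2 + |yn| * (s ^ 2 + t ^ 2)))
    (hξ : |ξn| ≤ C₁ * δ) :
    |a - 2| ≤ (C₁ ^ 2 + K * (c + 2 * (S + 1))) * δ := by
  have hδ : 0 ≤ δ := by linarith [abs_nonneg yn]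
  have hξ2 : ξn ^ 2 ≤ C₁ ^ 2 * δ := by
    have : ξn ^ 2 ≤ (C₁ * δ) ^ 2 := by
      rw [← sq_abs]; exact pow_le_pow_left₀ (abs_nonneg _) hξ 2
    nlinarith [mul_le_mul_of_nonneg_left hδ1 hδ, sq_nonneg C₁]
  have ht2 : t ^ 2 ≤ c * δ := by nlinarith
  have hyn' : |yn| * (s ^ 2 + t ^ 2) ≤ 2 * δ * (S + 1) :=
    mul_le_mul hyn (by nlinarith) (by positivity) (by linarith [abs_nonneg yn])
  have hK' : K * (t ^ 2 + |yn| * (s ^ 2 + t ^ 2)) ≤ K * (c * δ + 2 * δ * (S + 1)) := by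
    gcongr
  rw [abs_le] at hD ⊢
  constructor <;> linarith [sq_nonneg ξn, mul_nonneg (sq_nonneg C₁) hδ]

lemma exists_pos_small {c L A : ℝ} (hc : 0 ≤ c) (hL : 0 ≤ L) (hA : 0 < A) :
    ∃ δ : ℝ, 0 < δ ∧ 2 * δ ≤ 1 ∧ c * δ ≤ 1 ∧ L * δ ≤ A := by
  have hX : 0 < 2 + c + L / A := by positivity
  have hδ := one_div_mul_cancel hX.ne'
  set δ := 1 / (2 + c + L / A)
  have hδ0 : 0 < δ := by positivity
  refine ⟨δ, hδ0, ?_⟩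
  have hsum : 2 * δ + c * δ + L / A * δ = 1 := by linear_combination hδ
  have hcδ : 0 ≤ c * δ := by positivity
  have hLδ : 0 ≤ L / A * δ := by positivity
  refine ⟨by linarith, by linarith, ?_⟩
  rw [← div_le_one hA, mul_div_right_comm]
  linarith

end Scalar

theorem statement1_general (m : ℕ)
    (cY CY CR cρ A0 A1 : ℝ)
    (hCR : 0 < CR) (hcρ : 0 < cρ)
    (hA0 : 0 < A0) (hA1 : 0 < A1) :
    ∃ τY : ℝ, 0 < τY ∧ ∃ C : ℝ, 0 < C ∧
      ∀ (A B : Esp m → Matrix (Fin m) (Fin m) ℝ)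
        (R : Esp m × ℝ → Matrix (Fin m) (Fin m) ℝ),
        (∀ i j, ContDiffOn ℝ (⊤ : ℕ∞) (fun y' => A y' i j) {y' : Esp m | ‖y'‖ < 2 * cY}) →
        (∀ i j, ContDiffOn ℝ (⊤ : ℕ∞) (fun y' => B y' i j) {y' : Esp m | ‖y'‖ < 2 * cY}) →
        (∀ i j, ContDiff ℝ (⊤ : ℕ∞) (fun y => R y i j)) →
        (∀ y' : Esp m, ‖y'‖ < 2 * cY → ∀ ξ' : Esp m,
          A1 * ‖ξ'‖ ^ 2 ≤ quadForm (A y') ξ') →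
        (∀ y' : Esp m, ‖y'‖ < 2 * cY → ∀ ξ' : Esp m,
          CY * quadForm (A y') ξ' ≤ quadForm (B y') ξ') →
        (∀ y' : Esp m, ‖y'‖ < 2 * cY → ∀ i j,
          |A y' i j| ≤ A0 ∧ |B y' i j| ≤ A0 ∧
          ∀ k, |fderiv ℝ (fun w => A w i j) y' (EuclideanSpace.single k (1 : ℝ))| ≤ A0 ∧
               |fderiv ℝ (fun w => B w i j) y' (EuclideanSpace.single k (1 : ℝ))| ≤ A0) →
        (∀ y : Esp m × ℝ, |y.2| ≤ 1 → ∀ ξ' : Esp m,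
          |quadForm (R y) ξ'| ≤ CR * y.2 ^ 2 * ‖ξ'‖ ^ 2 ∧
          ‖fderiv ℝ (fun w => quadForm (R w) ξ') y‖ ≤ CR * |y.2| * ‖ξ'‖ ^ 2) →
        ∀ τ : ℝ, 0 < τ → τ ≤ τY →
        ∀ ε : ℝ, 0 < ε → ε ≤ τY / 10 →
        ∀ ρ : Esp m → ℝ, ContDiff ℝ (⊤ : ℕ∞) ρ → (∀ y', ρ y' ≤ 0) →
          (∀ y', ‖fderiv ℝ ρ y'‖ ≤ cρ) →
          (∀ y', ‖fderiv ℝ (fderiv ℝ ρ) y'‖ ≤ cρ) →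
        ∀ z : (Esp m × ℝ) × (Esp m × ℝ),
          ‖z.1.1‖ < cY → -(2 * ε) < z.1.2 → z.1.2 < τ + 2 * ε →
          pPsi A B R τ ρ z = 0 →
          |z.2.2| ≤ C * τY ∧ |quadForm (A z.1.1) z.2.1 - 2| ≤ C * τY := by
  set K := 2 * (A0 + CR)
  set c := 2 * m * cρ with hc
  obtain ⟨δ, hδ, hδ2, hcδ, hKδ⟩ :=
    exists_pos_small (by positivity : 0 ≤ c) (by positivity : 0 ≤ 4 * m * K) hA1
  set S := 4 * m * (1 + K) / A1
  set C₁ := K * (S + 1) * (c + 2)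
  set C₂ := C₁ ^ 2 + K * (c + 2 * (S + 1))
  refine ⟨δ, hδ, C₁ + C₂, by positivity, ?_⟩
  intro A B R _ _ _ hAlow _ hEnt hRbd τ hτ hτδ ε _ hε ρ _ _ hρ' _ ⟨⟨y', yn⟩, ξ', ξn⟩ hy'Y hyl hyr hp
  have hyn : |yn| ≤ 2 * δ := abs_le.2 ⟨by linarith, by linarith⟩
  have hyn1 : |yn| ≤ 1 := hyn.trans hδ2
  have hy' : ‖y'‖ < 2 * cY := by linarith [norm_nonneg y']
  rw [pPsi_eq_conjSymbol] at hp
  set η : Esp m := WithLp.toLp 2 fun j => 2 * τ * fderiv ℝ ρ y' (EuclideanSpace.single j 1)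
  obtain ⟨hD, him⟩ := bounds_of_conjSymbol_eq_zero hA0.le hCR.le
    (fun i j => (hEnt y' hy' i j).1) (fun i j => (hEnt y' hy' i j).2.1)
    (fun v => (hRbd (y', yn) hyn1 v).1) hyn1 hp
  have ht : ∑ i, |η i| ≤ c * δ :=
    calc ∑ i, |η i| ≤ m * |2 * τ| * ‖fderiv ℝ ρ y'‖ := sum_abs_mul_apply_single_le _ _
      _ ≤ m * (2 * δ) * cρ := by
          rw [abs_of_pos (by positivity)]
          gcongr
          exact hρ' y'
      _ = c * δ := by rw [hc]; ring
  have ht0 : 0 ≤ ∑ i, |η i| := by positivity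
  have ht1 : ∑ i, |η i| ≤ 1 := ht.trans hcδ
  have hS := sq_le_of_near_char m.cast_nonneg (by positivity) hA1 hδ2 hKδ ht0 ht1 hyn
    (mul_sq_sum_abs_le hA1.le (hAlow y' hy' ξ')) hD
  have hξ := abs_le_of_near_char (by positivity) (by positivity) hS ht0 ht ht1 hyn him
  have ha := abs_sub_two_le_of_near_char (by positivity) hS ht0 ht ht1 (by linarith) hyn hD hξ
  have hC₁ : 0 ≤ C₁ := by positivity
  have hC₂ : 0 ≤ C₂ := by positivity
  exact ⟨hξ.trans (mul_le_mul_of_nonneg_right (by linarith) hδ.le),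
    ha.trans (mul_le_mul_of_nonneg_right (by linarith) hδ.le)⟩

/-- there are `τ_Y > 0` and `C > 0`, depending only on `n = m + 1` and the
constants `c_Y, C_Y, C_R, c_ρ, A₀, A₁`, such that for all data `a, b, R` as in the
context, all `0 < τ ≤ τ_Y`, `0 < ε ≤ τ_Y/10`, all smooth `ρ ≤ 0` with first and second
derivatives bounded by `c_ρ`, and every `(y, ξ)` with `y ∈ W(τ, ε)` and
`p_ψ(y, ξ) = 0`, one has `|ξₙ| ≤ C τ_Y` and `|a(y', ξ') − 2| ≤ C τ_Y`; i.e. the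
characteristic set of the conjugated symbol lies in
`{a(y',ξ') = 2 + O(τ_Y), ξₙ = O(τ_Y)}`. -/
theorem statement1 (m : ℕ) (hm : 1 ≤ m)
    (cY CY CR cρ A0 A1 : ℝ)
    (hcY : 0 < cY) (hCY : 0 < CY) (hCR : 0 < CR) (hcρ : 0 < cρ)
    (hA0 : 0 < A0) (hA1 : 0 < A1) :
    ∃ τY : ℝ, 0 < τY ∧ ∃ C : ℝ, 0 < C ∧
      ∀ (A B : Esp m → Matrix (Fin m) (Fin m) ℝ)
        (R : Esp m × ℝ → Matrix (Fin m) (Fin m) ℝ),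
        (∀ i j, ContDiffOn ℝ (⊤ : ℕ∞) (fun y' => A y' i j) {y' : Esp m | ‖y'‖ < 2 * cY}) →
        (∀ i j, ContDiffOn ℝ (⊤ : ℕ∞) (fun y' => B y' i j) {y' : Esp m | ‖y'‖ < 2 * cY}) →
        (∀ i j, ContDiff ℝ (⊤ : ℕ∞) (fun y => R y i j)) →
        (∀ y' : Esp m, ‖y'‖ < 2 * cY → ∀ ξ' : Esp m,
          A1 * ‖ξ'‖ ^ 2 ≤ quadForm (A y') ξ') →
        (∀ y' : Esp m, ‖y'‖ < 2 * cY → ∀ ξ' : Esp m,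
          CY * quadForm (A y') ξ' ≤ quadForm (B y') ξ') →
        (∀ y' : Esp m, ‖y'‖ < 2 * cY → ∀ i j,
          |A y' i j| ≤ A0 ∧ |B y' i j| ≤ A0 ∧
          ∀ k, |fderiv ℝ (fun w => A w i j) y' (EuclideanSpace.single k (1 : ℝ))| ≤ A0 ∧
               |fderiv ℝ (fun w => B w i j) y' (EuclideanSpace.single k (1 : ℝ))| ≤ A0) →
        (∀ y : Esp m × ℝ, |y.2| ≤ 1 → ∀ ξ' : Esp m,
          |quadForm (R y) ξ'| ≤ CR * y.2 ^ 2 * ‖ξ'‖ ^ 2 ∧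
          ‖fderiv ℝ (fun w => quadForm (R w) ξ') y‖ ≤ CR * |y.2| * ‖ξ'‖ ^ 2) →
        ∀ τ : ℝ, 0 < τ → τ ≤ τY →
        ∀ ε : ℝ, 0 < ε → ε ≤ τY / 10 →
        ∀ ρ : Esp m → ℝ, ContDiff ℝ (⊤ : ℕ∞) ρ → (∀ y', ρ y' ≤ 0) →
          (∀ y', ‖fderiv ℝ ρ y'‖ ≤ cρ) →
          (∀ y', ‖fderiv ℝ (fderiv ℝ ρ) y'‖ ≤ cρ) →
        ∀ z : (Esp m × ℝ) × (Esp m × ℝ),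
          ‖z.1.1‖ < cY → -(2 * ε) < z.1.2 → z.1.2 < τ + 2 * ε →
          pPsi A B R τ ρ z = 0 →
          |z.2.2| ≤ C * τY ∧ |quadForm (A z.1.1) z.2.1 - 2| ≤ C * τY :=
  statement1_general m cY CY CR cρ A0 A1 hCR hcρ hA0 hA1
end
end

section
/- Let q : ℝⁿ × ℝⁿ → ℂ belong to S⁰, and let B : ℝⁿ × ℝ^{n−1} → ℝ be smooth, bounded together with all its partial derivatives, and satisfy B(x, ξ') ≥ c₀ for some constant c₀ > 0. Then the quotient symbol a₀(x, ξ) := q(x, ξ) / (ξ_n − i B(x, ξ')) is a smooth function on ℝⁿ × ℝⁿ that is bounded together with all of its partial derivatives; that is, a₀ ∈ S⁰. -/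
/-!
Write the denominator as `d = ξₙ + g` with `g(x, ξ) = -i B(x, ξ')`; composing with linear maps
keeps `g` in `S⁰`. Although `d` itself is unbounded, `dd = dξₙ + dg` lies in `S⁰`, and
`‖d‖ ≥ |Im d| = B ≥ c₀`. By Faà di Bruno the derivatives of `d⁻¹ = (w ↦ w⁻¹) ∘ d` involve only
the derivatives of `d` of order `≥ 1` and those of `w ↦ w⁻¹`, whose `k`-th one has norm
`k! ‖w‖^{-k-1} ≤ k! c₀^{-k-1}` on the range of `d`. Hence `d⁻¹ ∈ S⁰`, and `q / d = q · d⁻¹ ∈ S⁰`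
by the Leibniz rule.
-/

/-- A function on a normed space belongs to the symbol class `S⁰` if it is smooth and
bounded together with all of its (iterated Fréchet) derivatives. -/
def IsSymbolS0 {D : Type*} [NormedAddCommGroup D] [NormedSpace ℝ D]
    {F : Type*} [NormedAddCommGroup F] [NormedSpace ℝ F] (f : D → F) : Prop :=
  ContDiff ℝ (⊤ : ℕ∞) f ∧ ∀ k : ℕ, ∃ M : ℝ, ∀ z, ‖iteratedFDeriv ℝ k f z‖ ≤ M

open Nat

theorem norm_iteratedFDeriv_real_inv {𝕜 : Type*} [RCLike 𝕜] (n : ℕ) {w : 𝕜} (hw : w ≠ 0) :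
    ‖iteratedFDeriv ℝ n (Inv.inv : 𝕜 → 𝕜) w‖ = n ! * ‖w‖⁻¹ ^ (n + 1) := by
  rw [← (contDiffAt_inv 𝕜 hw (n := n)).restrictScalars_iteratedFDeriv (𝕜 := ℝ),
    Function.comp_apply, ContinuousMultilinearMap.norm_restrictScalars,
    norm_iteratedFDeriv_eq_norm_iteratedDeriv, iteratedDeriv_eq_iterate, iter_deriv_inv]
  have : (-1 - n : ℤ) = -(n + 1 : ℕ) := by push_cast; ring
  simp only [norm_mul, norm_pow, norm_neg, norm_one, one_pow, one_mul, RCLike.norm_natCast,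
    this, zpow_neg, zpow_natCast, norm_inv, inv_pow]

namespace IsSymbolS0

variable {D E F G : Type*} [NormedAddCommGroup D] [NormedSpace ℝ D]
  [NormedAddCommGroup E] [NormedSpace ℝ E] [NormedAddCommGroup F] [NormedSpace ℝ F]
  [NormedAddCommGroup G] [NormedSpace ℝ G]

theorem const (c : F) : IsSymbolS0 (fun _ : D => c) := by
  refine ⟨contDiff_const, fun k => ⟨‖c‖, fun z => ?_⟩⟩
  rcases k.eq_zero_or_pos with rfl | hk
  · simp
  · simp [iteratedFDeriv_const_of_ne hk.ne']

theorem add {f g : D → F} (hf : IsSymbolS0 f) (hg : IsSymbolS0 g) :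
    IsSymbolS0 (fun z => f z + g z) := by
  refine ⟨hf.1.add hg.1, fun k => ?_⟩
  obtain ⟨Mf, hMf⟩ := hf.2 k
  obtain ⟨Mg, hMg⟩ := hg.2 k
  refine ⟨Mf + Mg, fun z => ?_⟩
  rw [fun_iteratedFDeriv_add_apply (hf.1.of_le (mod_cast le_top)).contDiffAt
    (hg.1.of_le (mod_cast le_top)).contDiffAt]
  exact (norm_add_le _ _).trans (add_le_add (hMf z) (hMg z))

theorem comp_clm {f : D → F} (hf : IsSymbolS0 f) (L : E →L[ℝ] D) : IsSymbolS0 (f ∘ L) := by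
  refine ⟨hf.1.comp L.contDiff, fun k => ?_⟩
  obtain ⟨M, hM⟩ := hf.2 k
  refine ⟨M * ‖L‖ ^ k, fun z => ?_⟩
  rw [L.iteratedFDeriv_comp_right hf.1 z (mod_cast le_top)]
  refine (ContinuousMultilinearMap.norm_compContinuousLinearMap_le _ _).trans ?_
  rw [Finset.prod_const, Finset.card_univ, Fintype.card_fin]
  gcongr
  exact hM _

theorem clm_comp (L : F →L[ℝ] G) {f : D → F} (hf : IsSymbolS0 f) : IsSymbolS0 (L ∘ f) := by
  refine ⟨L.contDiff.comp hf.1, fun k => ?_⟩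
  obtain ⟨M, hM⟩ := hf.2 k
  refine ⟨‖L‖ * M, fun z => ?_⟩
  rw [L.iteratedFDeriv_comp_left hf.1.contDiffAt (mod_cast le_top)]
  exact (L.norm_compContinuousMultilinearMap_le _).trans (by gcongr; exact hM z)

protected theorem fderiv {f : D → F} (hf : IsSymbolS0 f) : IsSymbolS0 (fderiv ℝ f) :=
  ⟨hf.1.fderiv_right (m := (⊤ : ℕ∞)) (by simp), fun k => (hf.2 (k + 1)).imp fun _ hM z =>
    norm_iteratedFDeriv_fderiv.trans_le (hM z)⟩

theorem fderiv_clm_add (L : D →L[ℝ] F) {g : D → F} (hg : IsSymbolS0 g) :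
    IsSymbolS0 (fderiv ℝ (fun z => L z + g z)) := by
  have hdiff : Differentiable ℝ g := hg.1.differentiable (by simp)
  have : fderiv ℝ (fun z => L z + g z) = fun z => L + fderiv ℝ g z := funext fun z => by
    rw [fderiv_fun_add L.differentiableAt (hdiff z), L.fderiv]
  rw [this]
  exact (const L).add hg.fderiv

theorem mul {A : Type*} [NormedRing A] [NormedAlgebra ℝ A] {f g : D → A}
    (hf : IsSymbolS0 f) (hg : IsSymbolS0 g) : IsSymbolS0 (fun z => f z * g z) := by
  choose Mf hMf using hf.2
  choose Mg hMg using hg.2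
  refine ⟨hf.1.mul hg.1, fun k => ⟨∑ i ∈ Finset.range (k + 1), (k.choose i : ℝ) * |Mf i| *
    |Mg (k - i)|, fun z => ?_⟩⟩
  refine (norm_iteratedFDeriv_mul_le hf.1 hg.1 z (mod_cast le_top)).trans
    (Finset.sum_le_sum fun i _ => ?_)
  gcongr
  · exact (hMf i z).trans (le_abs_self _)
  · exact (hMg (k - i) z).trans (le_abs_self _)

theorem inv_of_fderiv_of_le_norm {𝕜 : Type*} [RCLike 𝕜] {f : D → 𝕜} (hf : ContDiff ℝ (⊤ : ℕ∞) f)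
    (hf' : IsSymbolS0 (fderiv ℝ f)) {c : ℝ} (hc : 0 < c) (hfc : ∀ z, c ≤ ‖f z‖) :
    IsSymbolS0 (fun z => (f z)⁻¹) := by
  have hf0 : ∀ z, f z ≠ 0 := fun z h => by simpa [h] using hc.trans_le (hfc z)
  refine ⟨hf.inv hf0, fun k => ?_⟩
  choose M hM using hf'.2
  obtain ⟨D, hD⟩ := Finset.exists_le ((Finset.range k).image M)
  let C := ∑ j ∈ Finset.range (k + 1), (j ! : ℝ) * c⁻¹ ^ (j + 1)
  refine ⟨k ! * C * max D 1 ^ k, fun z => ?_⟩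
  refine norm_iteratedFDeriv_comp_le' (Set.range_subset_iff.2 hf0)
    isOpen_compl_singleton.uniqueDiffOn ((contDiffOn_inv 𝕜).restrict_scalars ℝ) hf
    (mod_cast le_top) z (fun i hi => ?_) (fun i hi hik => ?_)
  · rw [iteratedFDerivWithin_of_isOpen i isOpen_compl_singleton (hf0 z),
      norm_iteratedFDeriv_real_inv i (hf0 z)]
    calc (i ! : ℝ) * ‖f z‖⁻¹ ^ (i + 1) ≤ i ! * c⁻¹ ^ (i + 1) := by
          gcongr
          exact hfc z
      _ ≤ C := Finset.single_le_sum (f := fun j => (j ! : ℝ) * c⁻¹ ^ (j + 1))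
          (fun j _ => by positivity) (Finset.mem_range.2 (by omega))
  · obtain ⟨j, rfl⟩ := Nat.exists_eq_add_of_le' hi
    rw [← norm_iteratedFDeriv_fderiv]
    calc _ ≤ M j := hM j z
      _ ≤ D := hD _ (Finset.mem_image_of_mem _ (Finset.mem_range.2 hik))
      _ ≤ max D 1 := le_max_left _ _
      _ ≤ max D 1 ^ (j + 1) := le_self_pow₀ (le_max_right _ _) (by omega)

end IsSymbolS0

/-- if `q ∈ S⁰` and `B` is smooth, bounded with all derivatives, with
`B ≥ c₀ > 0`, then the quotient symbol `a₀(x,ξ) = q(x,ξ)/(ξₙ - i B(x,ξ'))` is in `S⁰`.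
Here `n = m + 1`, points are `x ∈ ℝⁿ` and `ξ = (ξ', ξₙ) ∈ ℝ^{n-1} × ℝ`. -/
theorem statement12 (m : ℕ)
    (q : (Fin (m + 1) → ℝ) × ((Fin m → ℝ) × ℝ) → ℂ)
    (hq : IsSymbolS0 q)
    (B : (Fin (m + 1) → ℝ) × (Fin m → ℝ) → ℝ)
    (hB : IsSymbolS0 B)
    (c₀ : ℝ) (hc₀ : 0 < c₀)
    (hBlower : ∀ (x : Fin (m + 1) → ℝ) (ξ' : Fin m → ℝ), c₀ ≤ B (x, ξ')) :
    IsSymbolS0 (fun z => q z / ((z.2.2 : ℂ) - Complex.I * (B (z.1, z.2.1) : ℂ))) := by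
  let X := Fin (m + 1) → ℝ
  let Ξ' := Fin m → ℝ
  open ContinuousLinearMap in
  let ξn : X × (Ξ' × ℝ) →L[ℝ] ℂ := Complex.ofRealCLM.comp ((snd ℝ Ξ' ℝ).comp (snd ℝ X _))
  let xξ' : X × (Ξ' × ℝ) →L[ℝ] X × Ξ' := (fst ℝ X _).prod ((fst ℝ Ξ' ℝ).comp (snd ℝ X _))
  let g := ((-Complex.I) • Complex.ofRealCLM) ∘ B ∘ xξ'
  have hg : IsSymbolS0 g := .clm_comp _ (hB.comp_clm _)
  have hden : ∀ z, c₀ ≤ ‖ξn z + g z‖ := fun z => calc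
    c₀ ≤ B (z.1, z.2.1) := hBlower _ _
    _ = |(ξn z + g z).im| := by simp [g, ξn, xξ', abs_of_pos (hc₀.trans_le (hBlower _ _))]
    _ ≤ ‖ξn z + g z‖ := Complex.abs_im_le_norm _
  have hinv := IsSymbolS0.inv_of_fderiv_of_le_norm (ξn.contDiff.add hg.1) (hg.fderiv_clm_add ξn) hc₀ hden
  have hquot : (fun z => q z / ((z.2.2 : ℂ) - Complex.I * (B (z.1, z.2.1) : ℂ))) =
      fun z => q z * (ξn z + g z)⁻¹ := funext fun z => by
    simp [g, ξn, xξ', div_eq_mul_inv, sub_eq_add_neg]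
  rw [hquot]
  exact hq.mul hinv
end
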